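/- arXiv:1710.04775 — 5 statements merged into one kernel-verified Lean document; each statement's English description precedes it below -/
import Mathlib

section
/- For fixed N > 0 and R ≥ 0, the function f(γ) = ln 2 · √(N/(1 − (1+γ)⁻²)) · (log₂(1+γ) − R) is strictly increasing in γ on (0, ∞). -/
/-!
Substituting `x = 1 + γ` turns the function into `√N · x / √(x² - 1) · (log x - R log 2)`,
whose derivative on `x > 1` is `√N · (x² - 1 - log x + R log 2) / (x² - 1)^{3/2}`.
The numerator is positive because `log x < x - 1 < x² - 1` and `R ≥ 0`.
-/

open Real Set

lemma hasDerivAt_div_sqrt_sq_sub_one_mul_log_sub {x : ℝ} (hx : 1 < x) (c : ℝ) :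
    HasDerivAt (fun x => x / √(x ^ 2 - 1) * (log x - c))
      ((x ^ 2 - 1 - log x + c) / √(x ^ 2 - 1) ^ 3) x := by
  have hsq_pos : 0 < x ^ 2 - 1 := by nlinarith
  have hsqrt : HasDerivAt (fun x => √(x ^ 2 - 1)) (1 / (2 * √(x ^ 2 - 1)) * (2 * x)) x :=
    (hasDerivAt_sqrt hsq_pos.ne').comp x (by simpa using (hasDerivAt_pow 2 x).sub_const 1)
  have hs : 0 < √(x ^ 2 - 1) := sqrt_pos.2 hsq_pos
  have hs_sq : √(x ^ 2 - 1) ^ 2 = x ^ 2 - 1 := sq_sqrt hsq_pos.le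
  refine (((hasDerivAt_id' x).fun_div hsqrt hs.ne').fun_mul
    ((hasDerivAt_log (by positivity : x ≠ 0)).sub_const c)).congr_deriv ?_
  field_simp
  rw [hs_sq]
  ring

lemma strictMonoOn_div_sqrt_sq_sub_one_mul_log_sub {c : ℝ} (hc : 0 ≤ c) :
    StrictMonoOn (fun x => x / √(x ^ 2 - 1) * (log x - c)) (Ioi 1) := by
  refine strictMonoOn_of_deriv_pos (convex_Ioi 1)
    (fun x hx => (hasDerivAt_div_sqrt_sq_sub_one_mul_log_sub hx c).continuousAt.continuousWithinAt)
    (fun x hx => ?_)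
  rw [interior_Ioi, mem_Ioi] at hx
  rw [(hasDerivAt_div_sqrt_sq_sub_one_mul_log_sub hx c).deriv]
  have hlog : log x < x - 1 := log_lt_sub_one_of_pos (by linarith) hx.ne'
  have hnum : 0 < x ^ 2 - 1 - log x + c := by nlinarith
  have hs : 0 < √(x ^ 2 - 1) := sqrt_pos.2 (by nlinarith)
  positivity

lemma log_two_mul_sqrt_div_one_sub_inv_sq_mul (N : ℝ) {x : ℝ} (hx : 1 < x) (R : ℝ) :
    log 2 * √(N / (1 - (x ^ 2)⁻¹)) * (log x / log 2 - R) =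
      √N * (x / √(x ^ 2 - 1) * (log x - R * log 2)) := by
  have hsq_pos : 0 < x ^ 2 - 1 := by nlinarith
  have hlog2 : 0 < log 2 := log_pos one_lt_two
  have hfrac : N / (1 - (x ^ 2)⁻¹) = N * (x ^ 2 / (x ^ 2 - 1)) := by
    field_simp
  rw [hfrac, sqrt_mul' N (by positivity), sqrt_div (sq_nonneg x), sqrt_sq (by linarith)]
  field_simp

theorem f_strictMonoOn (N R : ℝ) (hN : 0 < N) (hR : 0 ≤ R) :
    StrictMonoOn
      (fun γ : ℝ => Real.log 2 * Real.sqrt (N / (1 - ((1 + γ) ^ 2)⁻¹)) *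
        (Real.log (1 + γ) / Real.log 2 - R))
      (Set.Ioi (0 : ℝ)) := by
  have hshift : MapsTo (fun γ : ℝ => 1 + γ) (Ioi 0) (Ioi 1) := fun γ (hγ : 0 < γ) =>
    show 1 < 1 + γ by linarith
  intro a ha b hb hab
  simp only
  rw [log_two_mul_sqrt_div_one_sub_inv_sq_mul N (hshift ha),
    log_two_mul_sqrt_div_one_sub_inv_sq_mul N (hshift hb)]
  refine mul_lt_mul_of_pos_left ?_ (sqrt_pos.2 hN)
  exact strictMonoOn_div_sqrt_sq_sub_one_mul_log_sub (by positivity) (hshift ha) (hshift hb)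
    (by linarith)
end

section
/- Let b > 0 and c ∈ ℝ, and define T(R) = R·(1 − Q(b·(c − R))) for R ∈ [0, c], where Q is the Gaussian tail function. Then T''(R) = −(2b/√(2π))·e^{−b²(c−R)²/2} − (R·b²·b(c−R)/√(2π))·e^{−b²(c−R)²/2} ≤ 0 on [0, c]; in particular, T is concave on [0, c]. -/
/-!
Writing `u = b (c - R)` and `φ` for the standard normal density, `Q' = -φ` and `φ'(x) = -x φ(x)`
give `T' = 1 - Q(u) - R b φ(u)` and `T'' = -2 b φ(u) - R b² u φ(u)`. On `[0, c]` both `R` and `u`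
are nonnegative, so `T'' ≤ 0` and `T` is concave there.
-/

noncomputable def gaussQ (x : ℝ) : ℝ :=
  ∫ t in Set.Ioi x, (Real.sqrt (2 * Real.pi))⁻¹ * Real.exp (-t ^ 2 / 2)

open Set MeasureTheory

theorem hasDerivAt_integral_Ioi {E : Type*} [NormedAddCommGroup E] [NormedSpace ℝ E]
    [CompleteSpace E] {f : ℝ → E} {x : ℝ} (hf : Integrable f) (hfx : ContinuousAt f x) :
    HasDerivAt (fun y => ∫ t in Ioi y, f t) (-f x) x := by
  have hsplit : (fun y => ∫ t in Ioi y, f t) = fun y => (∫ t in y..x, f t) + ∫ t in Ioi x, f t :=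
    funext fun y => (intervalIntegral.integral_interval_add_Ioi hf.integrableOn hf.integrableOn).symm
  rw [hsplit]
  exact (intervalIntegral.integral_hasDerivAt_left (hf.intervalIntegrable)
    hf.aestronglyMeasurable.stronglyMeasurableAtFilter hfx).add_const _

noncomputable def stdGaussPDF (x : ℝ) : ℝ := (Real.sqrt (2 * Real.pi))⁻¹ * Real.exp (-x ^ 2 / 2)

theorem integrable_stdGaussPDF : Integrable stdGaussPDF := by
  convert (integrable_exp_neg_mul_sq (by norm_num : (0 : ℝ) < 1 / 2)).const_mul
    (Real.sqrt (2 * Real.pi))⁻¹ using 3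
  simp only [stdGaussPDF]
  ring_nf

theorem continuous_stdGaussPDF : Continuous stdGaussPDF := by
  unfold stdGaussPDF
  fun_prop

theorem hasDerivAt_stdGaussPDF (x : ℝ) : HasDerivAt stdGaussPDF (-x * stdGaussPDF x) x := by
  have hexponent : HasDerivAt (fun t : ℝ => -t ^ 2 / 2) (-x) x :=
    (((hasDerivAt_pow 2 x).fun_neg).div_const 2).congr_deriv (by ring)
  exact (hexponent.exp.const_mul (Real.sqrt (2 * Real.pi))⁻¹).congr_deriv
    (by simp only [stdGaussPDF]; ring)

theorem hasDerivAt_gaussQ (x : ℝ) : HasDerivAt gaussQ (-stdGaussPDF x) x :=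
  hasDerivAt_integral_Ioi integrable_stdGaussPDF continuous_stdGaussPDF.continuousAt

section Throughput

variable (b c : ℝ)

noncomputable def throughput (R : ℝ) : ℝ := R * (1 - gaussQ (b * (c - R)))

noncomputable def throughputDeriv (R : ℝ) : ℝ :=
  1 - gaussQ (b * (c - R)) - R * b * stdGaussPDF (b * (c - R))

noncomputable def throughputDeriv2 (R : ℝ) : ℝ :=
  -(2 * b / Real.sqrt (2 * Real.pi)) * Real.exp (-(b ^ 2 * (c - R) ^ 2) / 2) -
    (R * b ^ 2 * (b * (c - R)) / Real.sqrt (2 * Real.pi)) * Real.exp (-(b ^ 2 * (c - R) ^ 2) / 2)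

variable (R : ℝ)

theorem throughputDeriv2_eq :
    throughputDeriv2 b c R = -(2 * b + R * b ^ 2 * (b * (c - R))) * stdGaussPDF (b * (c - R)) := by
  simp only [throughputDeriv2, stdGaussPDF]
  ring_nf

theorem hasDerivAt_mul_const_sub : HasDerivAt (fun R : ℝ => b * (c - R)) (-b) R :=
  (((hasDerivAt_id R).const_sub c).const_mul b).congr_deriv (by ring)

theorem hasDerivAt_gaussQ_mul_const_sub :
    HasDerivAt (fun R => gaussQ (b * (c - R))) (b * stdGaussPDF (b * (c - R))) R :=
  ((hasDerivAt_gaussQ _).comp R (hasDerivAt_mul_const_sub b c R)).congr_deriv (by ring)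

theorem hasDerivAt_stdGaussPDF_mul_const_sub :
    HasDerivAt (fun R => stdGaussPDF (b * (c - R)))
      (b * (b * (c - R)) * stdGaussPDF (b * (c - R))) R :=
  ((hasDerivAt_stdGaussPDF _).comp R (hasDerivAt_mul_const_sub b c R)).congr_deriv (by ring)

theorem hasDerivAt_throughput : HasDerivAt (throughput b c) (throughputDeriv b c R) R :=
  ((hasDerivAt_id R).mul ((hasDerivAt_gaussQ_mul_const_sub b c R).const_sub 1)).congr_deriv
    (by simp only [throughputDeriv, id_eq]; ring)

theorem hasDerivAt_throughputDeriv :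
    HasDerivAt (throughputDeriv b c) (throughputDeriv2 b c R) R :=
  (((hasDerivAt_gaussQ_mul_const_sub b c R).const_sub 1).sub
    (((hasDerivAt_id R).mul_const b).mul (hasDerivAt_stdGaussPDF_mul_const_sub b c R))).congr_deriv
    (by rw [throughputDeriv2_eq, id_eq]; ring)

theorem throughputDeriv2_nonpos (hb : 0 ≤ b) (hR : R ∈ Icc 0 c) :
    throughputDeriv2 b c R ≤ 0 := by
  have hgap : 0 ≤ c - R := sub_nonneg.2 hR.2
  have hR₀ : 0 ≤ R := hR.1
  rw [throughputDeriv2_eq, neg_mul, neg_nonpos]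
  unfold stdGaussPDF
  positivity

end Throughput

theorem throughput_concave (b c : ℝ) (hb : 0 < b)
    (T : ℝ → ℝ) (hT : T = fun R => R * (1 - gaussQ (b * (c - R)))) :
    (∀ R ∈ Set.Icc (0 : ℝ) c,
      deriv (deriv T) R =
        -(2 * b / Real.sqrt (2 * Real.pi)) * Real.exp (-(b ^ 2 * (c - R) ^ 2) / 2) -
          (R * b ^ 2 * (b * (c - R)) / Real.sqrt (2 * Real.pi)) *
            Real.exp (-(b ^ 2 * (c - R) ^ 2) / 2) ∧
      -(2 * b / Real.sqrt (2 * Real.pi)) * Real.exp (-(b ^ 2 * (c - R) ^ 2) / 2) -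
          (R * b ^ 2 * (b * (c - R)) / Real.sqrt (2 * Real.pi)) *
            Real.exp (-(b ^ 2 * (c - R) ^ 2) / 2) ≤ 0) ∧
    ConcaveOn ℝ (Set.Icc (0 : ℝ) c) T := by
  have hT : T = throughput b c := hT
  subst hT
  have hderiv : deriv (throughput b c) = throughputDeriv b c :=
    funext fun R => (hasDerivAt_throughput b c R).deriv
  refine ⟨fun R hR => ⟨?_, throughputDeriv2_nonpos b c R hb.le hR⟩, ?_⟩
  · rw [hderiv]
    exact (hasDerivAt_throughputDeriv b c R).deriv
  · exact concaveOn_of_hasDerivWithinAt2_nonpos (convex_Icc 0 c)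
      (fun R _ => (hasDerivAt_throughput b c R).continuousAt.continuousWithinAt)
      (fun R _ => (hasDerivAt_throughput b c R).hasDerivWithinAt)
      (fun R _ => (hasDerivAt_throughputDeriv b c R).hasDerivWithinAt)
      (fun R hR => throughputDeriv2_nonpos b c R hb.le (interior_subset hR))
end

section
/- Fix R ≥ 0 and define K(x) = (−1/x − x)(x² − 1) + 3 ln 2·(log₂ x − R)·x for x ≥ 1. Then K'(x) = −3x² − 1/x + 3 ln 2·(log₂ x − R) + 3 satisfies K'(x) ≤ K'(1) = −1 − 3 ln 2·R < 0 for all x ≥ 1, and consequently K(x) ≤ K(1) = −3 ln 2·R ≤ 0 for all x ≥ 1. -/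
theorem K_nonpos (R : ℝ) (hR : 0 ≤ R)
    (K Kp : ℝ → ℝ)
    (hK : K = fun x => (-(1 / x) - x) * (x ^ 2 - 1) +
      3 * Real.log 2 * (Real.log x / Real.log 2 - R) * x)
    (hKp : Kp = fun x => -3 * x ^ 2 - 1 / x +
      3 * Real.log 2 * (Real.log x / Real.log 2 - R) + 3) :
    (∀ x : ℝ, 1 ≤ x → Kp x ≤ Kp 1) ∧ Kp 1 = -1 - 3 * Real.log 2 * R ∧ Kp 1 < 0 ∧
    (∀ x : ℝ, 1 ≤ x → K x ≤ K 1) ∧ K 1 = -(3 * Real.log 2 * R) ∧ K 1 ≤ 0 := by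
  have hl2 : (0:ℝ) < Real.log 2 := Real.log_pos (by norm_num)
  have hl2' : Real.log 2 ≠ 0 := ne_of_gt hl2
  subst hK hKp
  simp only [Real.log_one, zero_div, zero_sub, one_pow, mul_one]
  have hKp1 : (-3:ℝ) - 1 / 1 + 3 * Real.log 2 * -R + 3 = -1 - 3 * Real.log 2 * R := by
    ring
  have hK1 : (-(1 / (1:ℝ)) - 1) * (1 - 1) + 3 * Real.log 2 * -R = -(3 * Real.log 2 * R) := by
    ring
  rw [hKp1, hK1]
  have hlog : ∀ x : ℝ, 1 ≤ x → Real.log x ≤ x - 1 := by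
    intro x hx
    have := Real.log_le_sub_one_of_pos (by linarith : (0:ℝ) < x)
    linarith
  refine ⟨?_, rfl, by nlinarith, ?_, rfl, by nlinarith⟩
  · intro x hx
    have hx0 : (0:ℝ) < x := by linarith
    have hl := hlog x hx
    have h1 : 3 * Real.log 2 * (Real.log x / Real.log 2 - R)
        = 3 * Real.log x - 3 * Real.log 2 * R := by
      field_simp
    rw [h1]
    have hxi : x * (1 / x) = 1 := mul_one_div_cancel (ne_of_gt hx0)
    have hip : 0 < 1 / x := by positivity
    nlinarith [mul_nonneg (sub_nonneg.2 hx) (sq_nonneg (x-1)),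
      mul_nonneg (mul_nonneg (sub_nonneg.2 hx) (sub_nonneg.2 hx)) hx0.le,
      mul_le_one₀ (le_refl (1:ℝ)) hip.le (by
        rw [div_le_one hx0]; exact hx)]
  · intro x hx
    have hx0 : (0:ℝ) < x := by linarith
    have hl := hlog x hx
    have h1 : 3 * Real.log 2 * (Real.log x / Real.log 2 - R) * x
        = 3 * Real.log x * x - 3 * Real.log 2 * R * x := by
      field_simp
    rw [h1]
    have hxi : x * (1 / x) = 1 := mul_one_div_cancel (ne_of_gt hx0)
    have hip : 0 < 1 / x := by positivity
    have hR1 : 3 * Real.log 2 * R ≤ 3 * Real.log 2 * R * x := by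
      nlinarith [mul_nonneg (mul_nonneg (mul_nonneg (by norm_num : (0:ℝ) ≤ 3) hl2.le) hR) (sub_nonneg.2 hx)]
    nlinarith [mul_nonneg (mul_nonneg (sub_nonneg.2 hx) (sub_nonneg.2 hx)) (sub_nonneg.2 hx),
      mul_nonneg (sub_nonneg.2 hx) (sq_nonneg (x-1)),
      mul_nonneg (mul_nonneg (sub_nonneg.2 hx) (sub_nonneg.2 hx)) hx0.le,
      mul_nonneg (Real.log_nonneg hx) (sub_nonneg.2 hx)]
end

section
/- For fixed N > 0 and R ≥ 0, the function f(γ) = √N · ln 2 · (log₂(1+γ) − R)/√(1 − (1+γ)⁻²) is concave on (0, ∞), i.e., its second derivative with respect to γ is ≤ 0. -/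
/-!
Write `x = 1 + γ` and `c = R ln 2 ≥ 0`, so that `f γ = √N · (ln x - c) / √(1 - x⁻²)`. Two
differentiations, using `√(x² - 1) = x √(1 - x⁻²)`, give `f'' = √N · K(x) / (x² - 1)^(5/2)` with
`K(x) = (-1/x - x)(x² - 1) + 3 (ln x - c) x`, and `ln x ≤ x - 1` shows `K ≤ 0` for `x ≥ 1`.
Concavity on `(0, ∞)` follows from the sign of the second derivative.
-/

open Real Set Filter

namespace FiniteBlocklength

noncomputable def qArg (c x : ℝ) : ℝ := (log x - c) / √(1 - (x ^ 2)⁻¹)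

noncomputable def K (c x : ℝ) : ℝ := (-x⁻¹ - x) * (x ^ 2 - 1) + 3 * (log x - c) * x

-- `log x ≤ x - 1` reduces `K ≤ 0` to the cubic `x (x - 1)² + 1 > 0`.
lemma K_nonpos {c x : ℝ} (hc : 0 ≤ c) (hx : 1 ≤ x) : K c x ≤ 0 := by
  have hx0 : 0 < x := by linarith
  have hx1 : 0 ≤ x - 1 := by linarith
  have hlog : log x - c ≤ x - 1 := by linarith [log_le_sub_one_of_pos hx0]
  refine nonpos_of_mul_nonpos_right (?_ : x * K c x ≤ 0) hx0
  calc x * K c x = -(x ^ 2 + 1) * (x ^ 2 - 1) + 3 * x ^ 2 * (log x - c) := by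
        unfold K
        field_simp
        ring
    _ ≤ -(x ^ 2 + 1) * (x ^ 2 - 1) + 3 * x ^ 2 * (x - 1) := by gcongr
    _ = -((x - 1) * (x * (x - 1) ^ 2 + 1)) := by ring
    _ ≤ 0 := neg_nonpos.mpr (by positivity)

lemma one_sub_inv_sq_pos {x : ℝ} (hx : 1 < x) : 0 < 1 - (x ^ 2)⁻¹ :=
  sub_pos.mpr (inv_lt_one_of_one_lt₀ (one_lt_pow₀ hx two_ne_zero))

lemma hasDerivAt_one_sub_inv_sq {x : ℝ} (hx : x ≠ 0) :
    HasDerivAt (fun y : ℝ => 1 - (y ^ 2)⁻¹) (2 / x ^ 3) x := by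
  refine (((hasDerivAt_pow 2 x).inv (pow_ne_zero 2 hx)).const_sub 1).congr_deriv ?_
  field_simp
  ring

lemma hasDerivAt_qArg (c : ℝ) {x : ℝ} (hx : 1 < x) :
    HasDerivAt (qArg c) ((x ^ 2 - 1 - (log x - c)) / (x * √(1 - (x ^ 2)⁻¹)) ^ 3) x := by
  have hx0 : x ≠ 0 := by positivity
  have hu := one_sub_inv_sq_pos hx
  have hS2 : √(1 - (x ^ 2)⁻¹) ^ 2 = 1 - (x ^ 2)⁻¹ := sq_sqrt hu.le
  have hS : 0 < √(1 - (x ^ 2)⁻¹) := sqrt_pos.mpr hu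
  refine (((hasDerivAt_log hx0).sub_const c).div ((hasDerivAt_one_sub_inv_sq hx0).sqrt hu.ne')
    hS.ne').congr_deriv ?_
  set S := √(1 - (x ^ 2)⁻¹)
  field_simp
  field_simp at hS2
  linear_combination hS2

lemma hasDerivAt_deriv_qArg (c : ℝ) {x : ℝ} (hx : 1 < x) :
    HasDerivAt (deriv (qArg c)) (K c x / (x * √(1 - (x ^ 2)⁻¹)) ^ 5) x := by
  have hx0 : x ≠ 0 := by positivity
  have hu := one_sub_inv_sq_pos hx
  have hS2 : √(1 - (x ^ 2)⁻¹) ^ 2 = 1 - (x ^ 2)⁻¹ := sq_sqrt hu.le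
  have hnum : HasDerivAt (fun y => y ^ 2 - 1 - (log y - c)) (2 * x - x⁻¹) x :=
    (((hasDerivAt_pow 2 x).sub_const 1).sub ((hasDerivAt_log hx0).sub_const c)).congr_deriv
      (by ring)
  have hden : HasDerivAt (fun y => (y * √(1 - (y ^ 2)⁻¹)) ^ 3)
      (3 * (x * √(1 - (x ^ 2)⁻¹)) ^ 2 *
        (√(1 - (x ^ 2)⁻¹) + x * (2 / x ^ 3 / (2 * √(1 - (x ^ 2)⁻¹))))) x :=
    (((hasDerivAt_id' x).fun_mul ((hasDerivAt_one_sub_inv_sq hx0).sqrt hu.ne')).fun_pow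
      3).congr_deriv (by ring)
  have hS : 0 < √(1 - (x ^ 2)⁻¹) := sqrt_pos.mpr hu
  have hderiv : deriv (qArg c) =ᶠ[nhds x]
      fun y => (y ^ 2 - 1 - (log y - c)) / (y * √(1 - (y ^ 2)⁻¹)) ^ 3 :=
    eventually_of_mem (Ioi_mem_nhds hx) fun y hy => (hasDerivAt_qArg c hy).deriv
  refine ((hnum.div hden (by positivity)).congr_of_eventuallyEq hderiv).congr_deriv ?_
  unfold K
  set S := √(1 - (x ^ 2)⁻¹)
  field_simp
  field_simp at hS2
  linear_combination (3 * (log x - c) - x ^ 2 + 2) * hS2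

lemma deriv_deriv_qArg_nonpos {c x : ℝ} (hc : 0 ≤ c) (hx : 1 < x) :
    deriv (deriv (qArg c)) x ≤ 0 := by
  rw [(hasDerivAt_deriv_qArg c hx).deriv]
  exact div_nonpos_of_nonpos_of_nonneg (K_nonpos hc hx.le)
    (pow_nonneg (mul_nonneg (by linarith) (sqrt_nonneg _)) 5)

lemma concaveOn_qArg {c : ℝ} (hc : 0 ≤ c) : ConcaveOn ℝ (Ioi 1) (qArg c) :=
  concaveOn_of_deriv2_nonpos' (convex_Ioi 1)
    (fun x hx => (hasDerivAt_qArg c hx).differentiableAt.differentiableWithinAt)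
    (fun x hx => (hasDerivAt_deriv_qArg c hx).differentiableAt.differentiableWithinAt)
    (fun x hx => by simpa using deriv_deriv_qArg_nonpos hc hx)

end FiniteBlocklength

open FiniteBlocklength

theorem f_concave_general (N R : ℝ) (hR : 0 ≤ R) :
    ConcaveOn ℝ (Set.Ioi (0 : ℝ))
      (fun γ : ℝ => Real.sqrt N * Real.log 2 *
        ((Real.log (1 + γ) / Real.log 2 - R) / Real.sqrt (1 - ((1 + γ) ^ 2)⁻¹))) ∧
    ∀ γ : ℝ, 0 < γ →
      deriv (deriv (fun γ : ℝ => Real.sqrt N * Real.log 2 *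
        ((Real.log (1 + γ) / Real.log 2 - R) / Real.sqrt (1 - ((1 + γ) ^ 2)⁻¹)))) γ ≤ 0 := by
  have hc : 0 ≤ R * log 2 := mul_nonneg hR (log_nonneg one_le_two)
  have hf : (fun γ : ℝ => √N * log 2 * ((log (1 + γ) / log 2 - R) / √(1 - ((1 + γ) ^ 2)⁻¹))) =
      fun γ => √N * qArg (R * log 2) (1 + γ) := by
    funext γ
    have : log 2 ≠ 0 := (log_pos one_lt_two).ne'
    unfold qArg
    field_simp
  rw [hf]
  refine ⟨?_, fun γ hγ => ?_⟩
  · have := ((concaveOn_qArg hc).translate_right 1).smul (sqrt_nonneg N)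
    rwa [preimage_const_add_Ioi, sub_self] at this
  · simp only [deriv_const_mul_field', deriv_comp_const_add]
    exact mul_nonpos_of_nonneg_of_nonpos (sqrt_nonneg N)
      (deriv_deriv_qArg_nonpos hc (by linarith))

theorem f_concave (N R : ℝ) (hN : 0 < N) (hR : 0 ≤ R) :
    ConcaveOn ℝ (Set.Ioi (0 : ℝ))
      (fun γ : ℝ => Real.sqrt N * Real.log 2 *
        ((Real.log (1 + γ) / Real.log 2 - R) / Real.sqrt (1 - ((1 + γ) ^ 2)⁻¹))) ∧
    ∀ γ : ℝ, 0 < γ →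
      deriv (deriv (fun γ : ℝ => Real.sqrt N * Real.log 2 *
        ((Real.log (1 + γ) / Real.log 2 - R) / Real.sqrt (1 - ((1 + γ) ^ 2)⁻¹)))) γ ≤ 0 :=
  f_concave_general N R hR
end

section
/- Let b > 0, c > 0, T₀ > 0, and suppose R* ∈ (0, c) satisfies the stationarity condition (1/√(2π))·b·e^{−b²(c−R*)²/2} = (1 − Q(b(c−R*)))/R* together with R*·(1 − Q(b(c−R*))) > T₀. Then the fixed-point map F(R) = T₀/(1 − Q(b(c−R))) satisfies F'(R*) = T₀ / (R*·(1 − Q(b(c−R*)))) < 1. -/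
/-!
Differentiating `F = T₀ / G` with `G R = 1 - Q (b (c - R))` gives `F' = -T₀ G' / G²`. The
stationarity condition is `T'(R*) = G(R*) + R* G'(R*) = 0` for the throughput `T R = R G(R)`,
so `G'(R*) = -G(R*) / R*` and `F'(R*) = T₀ / (R* G(R*))`, which is `< 1` exactly because
`T(R*) > T₀`.
-/

open Real Set MeasureTheory

theorem integrable_gaussDensity :
    Integrable fun t : ℝ => (√(2 * π))⁻¹ * exp (-t ^ 2 / 2) := by
  have h := (integrable_exp_neg_mul_sq (b := 1 / 2) (by norm_num)).const_mul (√(2 * π))⁻¹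
  refine h.congr (Filter.Eventually.of_forall fun t => ?_)
  ring_nf

theorem gaussQ_eq_gaussQ_zero_sub_integral (x : ℝ) :
    gaussQ x = gaussQ 0 - ∫ t in (0 : ℝ)..x, (√(2 * π))⁻¹ * exp (-t ^ 2 / 2) := by
  rw [← intervalIntegral.integral_Ioi_sub_Ioi' integrable_gaussDensity.integrableOn
    integrable_gaussDensity.integrableOn]
  unfold gaussQ
  ring

theorem hasDerivAt_gaussQ_s18 (x : ℝ) :
    HasDerivAt gaussQ (-((√(2 * π))⁻¹ * exp (-x ^ 2 / 2))) x := by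
  have hcont : Continuous fun t : ℝ => (√(2 * π))⁻¹ * exp (-t ^ 2 / 2) := by fun_prop
  have hFTC := intervalIntegral.integral_hasDerivAt_right
    (integrable_gaussDensity.intervalIntegrable (a := 0) (b := x))
    (hcont.stronglyMeasurableAtFilter _ _) hcont.continuousAt
  rw [funext gaussQ_eq_gaussQ_zero_sub_integral]
  exact hFTC.const_sub (gaussQ 0)

theorem hasDerivAt_one_sub_gaussQ_affine (b c R : ℝ) :
    HasDerivAt (fun R => 1 - gaussQ (b * (c - R)))
      (-(b * ((√(2 * π))⁻¹ * exp (-(b * (c - R)) ^ 2 / 2)))) R := by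
  have hinner : HasDerivAt (fun R => b * (c - R)) (-b) R := by
    simpa using ((hasDerivAt_id R).const_sub c).const_mul b
  refine (((hasDerivAt_gaussQ_s18 (b * (c - R))).comp R hinner).const_sub 1).congr_deriv ?_
  ring

theorem HasDerivAt.const_div_of_mul_stationary {G : ℝ → ℝ} {G' x : ℝ} (a : ℝ)
    (hG : HasDerivAt G G' x) (hx : x * G x ≠ 0) (hstat : G x + x * G' = 0) :
    HasDerivAt (fun R => a / G R) (a / (x * G x)) x := by
  have hx0 : x ≠ 0 := left_ne_zero_of_mul hx
  have hG0 : G x ≠ 0 := right_ne_zero_of_mul hx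
  have hG' : G' = -G x / x := by field_simp; linarith
  refine ((hasDerivAt_const x a).div hG hG0).congr_deriv ?_
  rw [hG']
  field_simp
  ring

theorem contraction_at_stationary_point_general (T₀ b c R' : ℝ) (hT₀ : 0 < T₀)
    (hstat : 1 / Real.sqrt (2 * Real.pi) * b * Real.exp (-(b ^ 2 * (c - R') ^ 2) / 2) =
      (1 - gaussQ (b * (c - R'))) / R')
    (hT : T₀ < R' * (1 - gaussQ (b * (c - R'))))
    (F : ℝ → ℝ) (hF : F = fun R => T₀ / (1 - gaussQ (b * (c - R)))) :
    deriv F R' = T₀ / (R' * (1 - gaussQ (b * (c - R')))) ∧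
    deriv F R' < 1 := by
  have hpos : 0 < R' * (1 - gaussQ (b * (c - R'))) := hT₀.trans hT
  have hR' : R' ≠ 0 := left_ne_zero_of_mul hpos.ne'
  have hderiv : deriv F R' = T₀ / (R' * (1 - gaussQ (b * (c - R')))) := by
    refine hF ▸ ((hasDerivAt_one_sub_gaussQ_affine b c R').const_div_of_mul_stationary T₀
      hpos.ne' ?_).deriv
    have hslope : b * ((√(2 * π))⁻¹ * exp (-(b * (c - R')) ^ 2 / 2)) =
        (1 - gaussQ (b * (c - R'))) / R' := by
      rw [← hstat, mul_pow]
      ring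
    rw [hslope]
    field_simp
    ring
  exact ⟨hderiv, hderiv ▸ (div_lt_one hpos).2 hT⟩

theorem contraction_at_stationary_point (T₀ b c R' : ℝ) (hT₀ : 0 < T₀) (hb : 0 < b)
    (hc : 0 < c) (hR' : R' ∈ Set.Ioo (0 : ℝ) c)
    (hstat : 1 / Real.sqrt (2 * Real.pi) * b * Real.exp (-(b ^ 2 * (c - R') ^ 2) / 2) =
      (1 - gaussQ (b * (c - R'))) / R')
    (hT : T₀ < R' * (1 - gaussQ (b * (c - R'))))
    (F : ℝ → ℝ) (hF : F = fun R => T₀ / (1 - gaussQ (b * (c - R)))) :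
    deriv F R' = T₀ / (R' * (1 - gaussQ (b * (c - R')))) ∧
    deriv F R' < 1 :=
  contraction_at_stationary_point_general T₀ b c R' hT₀ hstat hT F hF
end
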